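/- Let G be a simple connected graph and suppose κ_LLY(x,y) ≥ κ₀ > 0 for every edge xy of G. Then the diameter of G satisfies diam(G) ≤ 2/κ₀. -/

import Mathlib

open Filter Set

variable {V : Type*}

-- The `α`-lazy random walk distribution at vertex `x`.
open Classical in
noncomputable def lazyWalk (G : SimpleGraph V) [G.LocallyFinite] (α : ℝ) (x : V) : V → ℝ :=
  fun v => if v = x then α else if G.Adj x v then (1 - α) / (G.degree x : ℝ) else 0

/-- `A` is a coupling between the finitely supported distributions `m₁` and `m₂`. -/
def IsCoupling (m₁ m₂ : V → ℝ) (A : V → V → ℝ) : Prop :=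
  (Function.support fun p : V × V => A p.1 p.2).Finite ∧
  (∀ x y, 0 ≤ A x y ∧ A x y ≤ 1) ∧
  (∀ x, ∑ᶠ y, A x y = m₁ x) ∧
  (∀ y, ∑ᶠ x, A x y = m₂ y)

/-- The transportation (Wasserstein) distance between two distributions on `V`,
with respect to the graph distance of `G`. -/
noncomputable def transportDist (G : SimpleGraph V) (m₁ m₂ : V → ℝ) : ℝ :=
  sInf {w : ℝ | ∃ A : V → V → ℝ, IsCoupling m₁ m₂ A ∧
    w = ∑ᶠ p : V × V, A p.1 p.2 * (G.dist p.1 p.2 : ℝ)}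

/-- The `α`-Ricci curvature `κ_α(x,y)`. -/
noncomputable def alphaRicci (G : SimpleGraph V) [G.LocallyFinite] (α : ℝ) (x y : V) : ℝ :=
  1 - transportDist G (lazyWalk G α x) (lazyWalk G α y) / (G.dist x y : ℝ)

/-- `κ` is the Lin–Lu–Yau Ricci curvature of the pair `(x,y)`:
the limit of `κ_α(x,y)/(1-α)` as `α → 1⁻`. -/
def HasLLYCurv (G : SimpleGraph V) [G.LocallyFinite] (x y : V) (κ : ℝ) : Prop :=
  Tendsto (fun α : ℝ => alphaRicci G α x y / (1 - α)) (nhdsWithin 1 (Set.Iio 1)) (nhds κ)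

/-- `G` is positively curved: every edge has positive Lin–Lu–Yau Ricci curvature. -/
def PositivelyCurved (G : SimpleGraph V) [G.LocallyFinite] : Prop :=
  ∀ ⦃x y : V⦄, G.Adj x y → ∃ κ : ℝ, 0 < κ ∧ HasLLYCurv G x y κ

/-- `G` is planar: it admits a topological embedding in the plane, i.e. an injective
placement of the vertices together with arcs for the edges, where arcs are injective
continuous curves joining the endpoints, not passing through any other vertex, and
two arcs of distinct edges meet only in common endpoints. -/
def IsPlanar (G : SimpleGraph V) : Prop :=
  ∃ (f : V → ℝ × ℝ) (e : ∀ u v : V, G.Adj u v → Set.Icc (0:ℝ) 1 → ℝ × ℝ),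
    Function.Injective f ∧
    (∀ u v (h : G.Adj u v), Continuous (e u v h)) ∧
    (∀ u v (h : G.Adj u v), Function.Injective (e u v h)) ∧
    (∀ u v (h : G.Adj u v),
      e u v h ⟨0, Set.left_mem_Icc.mpr zero_le_one⟩ = f u ∧
      e u v h ⟨1, Set.right_mem_Icc.mpr zero_le_one⟩ = f v) ∧
    (∀ u v (h : G.Adj u v) (w : V), w ≠ u → w ≠ v → f w ∉ Set.range (e u v h)) ∧
    (∀ u v (h : G.Adj u v) (u' v' : V) (h' : G.Adj u' v'), ({u, v} : Set V) ≠ {u', v'} →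
      Set.range (e u v h) ∩ Set.range (e u' v' h') ⊆ (f '' {u, v}) ∩ (f '' {u', v'}))

/-!
Fix a geodesic `x = x₀, …, xₙ = y` and the `1`-Lipschitz function `f = d(·, y)`. Transport
cost dominates the change of the mean of any `1`-Lipschitz function (the easy half of
Kantorovich duality), so each edge gives `1 - κ_α(xᵢ, xᵢ₊₁) = W(m_{xᵢ}, m_{xᵢ₊₁}) ≥
m_{xᵢ} f - m_{xᵢ₊₁} f`. Summing, the right-hand side telescopes to `m_x f - m_y f`, which is at
least `n - 2(1 - α)` because a lazy step moves the mean of `f` by at most `1 - α`. Hence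
`∑ κ_α ≤ 2(1 - α)`; dividing by `1 - α` and letting `α → 1⁻` gives `n κ₀ ≤ ∑ κ_LLY ≤ 2`.
-/

open Function

namespace IsCoupling

variable {m₁ m₂ : V → ℝ} {A : V → V → ℝ}

lemma symm (hA : IsCoupling m₁ m₂ A) : IsCoupling m₂ m₁ (fun u v => A v u) := by
  obtain ⟨hfin, hbd, hrow, hcol⟩ := hA
  refine ⟨(hfin.image Prod.swap).subset fun p hp => ⟨p.swap, hp, rfl⟩, fun u v => hbd v u,
    hcol, hrow⟩

lemma finsum_mul_fst (hA : IsCoupling m₁ m₂ A) (g : V → ℝ) :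
    ∑ᶠ p : V × V, A p.1 p.2 * g p.1 = ∑ᶠ u, m₁ u * g u := by
  rw [finsum_curry _ (hA.1.subset (support_mul_subset_left _ _))]
  refine finsum_congr fun u => ?_
  have hrow : (support (A u)).Finite :=
    (hA.1.image Prod.snd).subset fun v hv => ⟨(u, v), hv, rfl⟩
  rw [← hA.2.2.1 u, finsum_mul' _ _ hrow]

lemma finsum_mul_snd (hA : IsCoupling m₁ m₂ A) (g : V → ℝ) :
    ∑ᶠ p : V × V, A p.1 p.2 * g p.2 = ∑ᶠ v, m₂ v * g v := by
  rw [← hA.symm.finsum_mul_fst g]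
  exact (finsum_comp_equiv (Equiv.prodComm V V)).symm

lemma finsum_mul_sub_le_cost (G : SimpleGraph V) (hA : IsCoupling m₁ m₂ A) {f : V → ℝ}
    (hf : ∀ u v, f u - f v ≤ G.dist u v) :
    ∑ᶠ u, m₁ u * f u - ∑ᶠ v, m₂ v * f v ≤ ∑ᶠ p : V × V, A p.1 p.2 * (G.dist p.1 p.2 : ℝ) := by
  have hfin (g : V × V → ℝ) : (support fun p : V × V => A p.1 p.2 * g p).Finite :=
    hA.1.subset (support_mul_subset_left _ _)
  rw [← hA.finsum_mul_fst, ← hA.finsum_mul_snd,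
    ← finsum_sub_distrib (hfin fun p => f p.1) (hfin fun p => f p.2)]
  simp only [← mul_sub]
  exact finsum_le_finsum' (hfin _) (hfin _) fun p =>
    mul_le_mul_of_nonneg_left (hf p.1 p.2) (hA.2.1 p.1 p.2).1

end IsCoupling

lemma finsum_mul_sub_le_transportDist (G : SimpleGraph V) {m₁ m₂ : V → ℝ}
    (hcoup : ∃ A, IsCoupling m₁ m₂ A) {f : V → ℝ} (hf : ∀ u v, f u - f v ≤ G.dist u v) :
    ∑ᶠ u, m₁ u * f u - ∑ᶠ v, m₂ v * f v ≤ transportDist G m₁ m₂ := by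
  obtain ⟨A, hA⟩ := hcoup
  refine le_csInf ⟨_, A, hA, rfl⟩ ?_
  rintro _ ⟨B, hB, rfl⟩
  exact hB.finsum_mul_sub_le_cost G hf

def IsFiniteProb (m : V → ℝ) : Prop :=
  (support m).Finite ∧ (∀ v, 0 ≤ m v) ∧ ∑ᶠ v, m v = 1

namespace IsFiniteProb

variable {m₁ m₂ : V → ℝ}

lemma le_one (h : IsFiniteProb m₁) (v : V) : m₁ v ≤ 1 :=
  h.2.2 ▸ single_le_finsum v h.1 h.2.1

lemma isCoupling_mul (h₁ : IsFiniteProb m₁) (h₂ : IsFiniteProb m₂) :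
    IsCoupling m₁ m₂ (fun u v => m₁ u * m₂ v) := by
  refine ⟨(h₁.1.prod h₂.1).subset fun p hp => ?_, fun u v => ?_, fun u => ?_, fun v => ?_⟩
  · exact ⟨left_ne_zero_of_mul hp, right_ne_zero_of_mul hp⟩
  · exact ⟨mul_nonneg (h₁.2.1 u) (h₂.2.1 v), mul_le_one₀ (h₁.le_one u) (h₂.2.1 v) (h₂.le_one v)⟩
  · rw [← mul_finsum' _ _ h₂.1, h₂.2.2, mul_one]
  · rw [← finsum_mul' _ _ h₁.1, h₁.2.2, one_mul]

end IsFiniteProb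

section LazyWalk

variable {G : SimpleGraph V} [G.LocallyFinite] {α : ℝ}

lemma support_lazyWalk_subset [DecidableEq V] (x : V) :
    support (lazyWalk G α x) ⊆ ↑(insert x (G.neighborFinset x)) := by
  intro v hv
  by_cases hvx : v = x
  · simp [hvx]
  · by_cases hadj : G.Adj x v
    · simp [hadj]
    · exact absurd (by simp [lazyWalk, hvx, hadj]) hv

lemma finsum_lazyWalk_mul (x : V) (f : V → ℝ) :
    ∑ᶠ v, lazyWalk G α x v * f v
      = α * f x + ∑ v ∈ G.neighborFinset x, (1 - α) / G.degree x * f v := by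
  classical
  rw [finsum_eq_sum_of_support_subset _
      ((support_mul_subset_left _ _).trans (support_lazyWalk_subset x)),
    Finset.sum_insert (by simp)]
  congr 1
  · simp [lazyWalk]
  · refine Finset.sum_congr rfl fun v hv => ?_
    rw [SimpleGraph.mem_neighborFinset] at hv
    simp [lazyWalk, hv.ne', hv]

lemma finsum_lazyWalk_mul_sub {x : V} (hx : 0 < G.degree x) (f : V → ℝ) :
    ∑ᶠ v, lazyWalk G α x v * f v - f x
      = (1 - α) / G.degree x * ∑ v ∈ G.neighborFinset x, (f v - f x) := by
  have hx' : (G.degree x : ℝ) ≠ 0 := by exact_mod_cast hx.ne'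
  rw [finsum_lazyWalk_mul, ← Finset.mul_sum, Finset.sum_sub_distrib, Finset.sum_const,
    SimpleGraph.card_neighborFinset_eq_degree, nsmul_eq_mul]
  field_simp
  ring

lemma lazyWalk_isFiniteProb (hα₀ : 0 ≤ α) (hα₁ : α ≤ 1) {x : V} (hx : 0 < G.degree x) :
    IsFiniteProb (lazyWalk G α x) := by
  classical
  refine ⟨(Finset.finite_toSet _).subset (support_lazyWalk_subset x), fun v => ?_, ?_⟩
  · unfold lazyWalk
    split_ifs
    exacts [hα₀, div_nonneg (by linarith) (Nat.cast_nonneg _), le_rfl]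
  · linarith [show ∑ᶠ v, lazyWalk G α x v - 1 = 0 by
      simpa using finsum_lazyWalk_mul_sub (α := α) hx fun _ => 1]

lemma abs_finsum_lazyWalk_mul_sub_le (hα₁ : α ≤ 1) {x : V} (hx : 0 < G.degree x) {f : V → ℝ}
    (hf : ∀ u v, f u - f v ≤ G.dist u v) :
    |∑ᶠ v, lazyWalk G α x v * f v - f x| ≤ 1 - α := by
  have hx' : (0 : ℝ) < G.degree x := by exact_mod_cast hx
  have hstep : ∀ v ∈ G.neighborFinset x, |f v - f x| ≤ 1 := fun v hv => by
    have hd := SimpleGraph.dist_eq_one_iff_adj.mpr ((G.mem_neighborFinset x v).mp hv)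
    have hd' : G.dist v x = 1 := by rwa [SimpleGraph.dist_comm]
    have := hf v x
    have := hf x v
    rw [abs_sub_le_iff]
    constructor <;> push_cast [hd, hd'] at * <;> linarith
  calc |∑ᶠ v, lazyWalk G α x v * f v - f x|
      = (1 - α) / G.degree x * |∑ v ∈ G.neighborFinset x, (f v - f x)| := by
        rw [finsum_lazyWalk_mul_sub hx, abs_mul, abs_of_nonneg (by positivity)]
    _ ≤ (1 - α) / G.degree x * G.degree x := by
        refine mul_le_mul_of_nonneg_left ?_ (div_nonneg (by linarith) hx'.le)
        refine (Finset.abs_sum_le_sum_abs _ _).trans ?_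
        simpa using Finset.sum_le_card_nsmul _ _ _ hstep
    _ = 1 - α := by field_simp

end LazyWalk

section Curvature

variable {G : SimpleGraph V} [G.LocallyFinite] {α : ℝ}

lemma exists_isCoupling_lazyWalk (hα₀ : 0 ≤ α) (hα₁ : α ≤ 1) {x y : V}
    (hx : 0 < G.degree x) (hy : 0 < G.degree y) :
    ∃ A, IsCoupling (lazyWalk G α x) (lazyWalk G α y) A :=
  ⟨_, (lazyWalk_isFiniteProb hα₀ hα₁ hx).isCoupling_mul (lazyWalk_isFiniteProb hα₀ hα₁ hy)⟩

lemma transportDist_lazyWalk_of_adj {u v : V} (h : G.Adj u v) :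
    transportDist G (lazyWalk G α u) (lazyWalk G α v) = 1 - alphaRicci G α u v := by
  simp [alphaRicci, SimpleGraph.dist_eq_one_iff_adj.mpr h]

lemma SimpleGraph.Walk.finsum_lazyWalk_mul_sub_le (hα₀ : 0 ≤ α) (hα₁ : α ≤ 1) {f : V → ℝ}
    (hf : ∀ u v, f u - f v ≤ G.dist u v) {a b : V} (p : G.Walk a b) :
    ∑ᶠ v, lazyWalk G α a v * f v - ∑ᶠ v, lazyWalk G α b v * f v
      ≤ p.length - (p.darts.map fun d => alphaRicci G α d.fst d.snd).sum := by
  induction p with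
  | nil => simp
  | @cons a b c hab p ih =>
    have hedge := finsum_mul_sub_le_transportDist G (exists_isCoupling_lazyWalk hα₀ hα₁
      (G.degree_pos_iff_exists_adj a |>.mpr ⟨b, hab⟩)
      (G.degree_pos_iff_exists_adj b |>.mpr ⟨a, hab.symm⟩)) hf
    rw [transportDist_lazyWalk_of_adj hab] at hedge
    simp only [SimpleGraph.Walk.length_cons, SimpleGraph.Walk.darts_cons, List.map_cons,
      List.sum_cons]
    push_cast
    linarith

lemma sum_alphaRicci_le_of_length_eq_dist (hc : G.Connected) (hα₀ : 0 ≤ α) (hα₁ : α ≤ 1)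
    {x y : V} (hxy : x ≠ y) (p : G.Walk x y) (hp : p.length = G.dist x y) :
    (p.darts.map fun d => alphaRicci G α d.fst d.snd).sum ≤ 2 * (1 - α) := by
  have : Nontrivial V := ⟨x, y, hxy⟩
  have hdeg := hc.preconnected.degree_pos_of_nontrivial
  let f : V → ℝ := fun v => G.dist v y
  have hf : ∀ u v, f u - f v ≤ G.dist u v := fun u v => by
    simp only [f, sub_le_iff_le_add]
    exact_mod_cast (hc.dist_triangle : G.dist u y ≤ G.dist u v + G.dist v y)
  have hwalk := p.finsum_lazyWalk_mul_sub_le hα₀ hα₁ hf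
  have hx := abs_le.mp (abs_finsum_lazyWalk_mul_sub_le hα₁ (hdeg x) hf)
  have hy := abs_le.mp (abs_finsum_lazyWalk_mul_sub_le hα₁ (hdeg y) hf)
  simp only [f, SimpleGraph.dist_self, Nat.cast_zero, sub_zero, hp] at hwalk hx hy
  linarith [hx.1, hy.2]

end Curvature

/-- Lemma 2 (diameter bound): if every edge of a simple connected graph has Lin–Lu–Yau
Ricci curvature at least `κ₀ > 0`, then the diameter of `G` is at most `2/κ₀`. -/
theorem diameter_bound (G : SimpleGraph V) [G.LocallyFinite] (hconn : G.Connected)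
    (κ₀ : ℝ) (hκ₀ : 0 < κ₀)
    (h : ∀ x y : V, G.Adj x y → ∃ κ : ℝ, κ₀ ≤ κ ∧ HasLLYCurv G x y κ) :
    ∀ x y : V, (G.dist x y : ℝ) ≤ 2 / κ₀ := by
  intro x y
  rcases eq_or_ne x y with rfl | hxy
  · simpa using (div_pos two_pos hκ₀).le
  obtain ⟨p, hp⟩ := hconn.exists_walk_length_eq_dist x y
  choose κ hκ₀_le hκ using fun d : G.Dart => h d.fst d.snd d.adj
  have hsum_le : (p.darts.map κ).sum ≤ 2 := by
    refine le_of_tendsto (tendsto_list_sum p.darts fun d _ => hκ d) ?_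
    filter_upwards [Ioo_mem_nhdsLT (show (0 : ℝ) < 1 from one_pos)] with α ⟨hα₀, hα₁⟩
    have hpos : 0 < 1 - α := sub_pos.mpr hα₁
    simp only [div_eq_mul_inv, List.sum_map_mul_right]
    rw [← le_div_iff₀ (inv_pos.mpr hpos), div_inv_eq_mul]
    linarith [sum_alphaRicci_le_of_length_eq_dist hconn hα₀.le hα₁.le hxy p hp]
  have hsum_ge : (p.length : ℝ) * κ₀ ≤ (p.darts.map κ).sum := by
    simpa using List.card_nsmul_le_sum (p.darts.map κ) κ₀ fun _ hk => by
      obtain ⟨d, -, rfl⟩ := List.mem_map.mp hk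
      exact hκ₀_le d
  rw [hp] at hsum_ge
  rw [le_div_iff₀ hκ₀]
  linarith
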